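/- Fano-type exponential bound: let Y be a discrete random variable taking finitely many values, F another random variable, and let P_e be the minimum error probability of predicting Y from F over all (possibly randomized) predictors. Then -log(1 - P_e) ≤ H(Y|F), and consequently P_e ≤ 1 - exp(-H(Y|F)). -/

import Mathlib

open Real Finset

variable {Ω : Type*} [Fintype Ω]

/-- Probability that a random variable `X` takes the value `a`, under pmf `p`. -/
noncomputable def probOf (p : Ω → ℝ) {α : Type*} [Fintype α] [DecidableEq α]
    (X : Ω → α) (a : α) : ℝ := ∑ ω, if X ω = a then p ω else 0

/-- Shannon entropy (in nats) of a discrete random variable. -/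
noncomputable def entropy (p : Ω → ℝ) {α : Type*} [Fintype α] [DecidableEq α]
    (X : Ω → α) : ℝ := -∑ a, probOf p X a * Real.log (probOf p X a)

/-- Mutual information `I(X;Y) = H(X) + H(Y) - H(X,Y)`. -/
noncomputable def mutualInfo (p : Ω → ℝ) {α β : Type*} [Fintype α] [DecidableEq α]
    [Fintype β] [DecidableEq β] (X : Ω → α) (Y : Ω → β) : ℝ :=
  entropy p X + entropy p Y - entropy p (fun ω => (X ω, Y ω))

/-- Conditional entropy `H(X|Z) = H(X,Z) - H(Z)`. -/
noncomputable def condEntropy (p : Ω → ℝ) {α γ : Type*} [Fintype α] [DecidableEq α]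
    [Fintype γ] [DecidableEq γ] (X : Ω → α) (Z : Ω → γ) : ℝ :=
  entropy p (fun ω => (X ω, Z ω)) - entropy p Z

/-- Conditional mutual information
`I(X;Y|Z) = H(X,Z) + H(Y,Z) - H(X,Y,Z) - H(Z)`. -/
noncomputable def condMutualInfo (p : Ω → ℝ) {α β γ : Type*} [Fintype α] [DecidableEq α]
    [Fintype β] [DecidableEq β] [Fintype γ] [DecidableEq γ]
    (X : Ω → α) (Y : Ω → β) (Z : Ω → γ) : ℝ :=
  entropy p (fun ω => (X ω, Z ω)) + entropy p (fun ω => (Y ω, Z ω))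
    - entropy p (fun ω => (X ω, Y ω, Z ω)) - entropy p Z

/-- `p` is a probability mass function on the finite sample space `Ω`. -/
def IsProbMass (p : Ω → ℝ) : Prop := (∀ ω, 0 ≤ p ω) ∧ ∑ ω, p ω = 1

/-- Bayes error rate of predicting `Y` from `F`:
`P_e = 1 - ∑_f max_y P(Y = y, F = f)`. -/
noncomputable def bayesError (p : Ω → ℝ) {α β : Type*} [Fintype α] [DecidableEq α]
    [Nonempty α] [Fintype β] [DecidableEq β] (Y : Ω → α) (F : Ω → β) : ℝ :=
  1 - ∑ f : β, Finset.univ.sup' Finset.univ_nonempty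
      (fun y : α => probOf p (fun ω => (Y ω, F ω)) (y, f))

/-! Write `q(y, f) = P(Y = y, F = f)`, `r(f) = P(F = f)` and `m(f) = max_y q(y, f)`, so that
`1 - P_e = ∑_f m(f)`. Bounding each `q(y, f)` inside the logarithm by `m(f)` gives
`H(Y|F) ≥ ∑_f r(f) log (r(f) / m(f))`, and Gibbs' inequality for the probability vector `r`
against the sub-probability vector `m` bounds the right-hand side below by `-log ∑_f m(f)`. -/

namespace Real

variable {ι : Type*}

theorem sum_mul_log_le_sum_mul_log_of_le (s : Finset ι) {x : ι → ℝ} {c : ℝ}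
    (hx : ∀ i ∈ s, 0 ≤ x i) (hxc : ∀ i ∈ s, x i ≤ c) :
    ∑ i ∈ s, x i * log (x i) ≤ (∑ i ∈ s, x i) * log c := by
  rw [Finset.sum_mul]
  refine Finset.sum_le_sum fun i hi => ?_
  rcases (hx i hi).eq_or_lt with hzero | hpos
  · simp [← hzero]
  · exact mul_le_mul_of_nonneg_left (log_le_log hpos (hxc i hi)) hpos.le

/-- Gibbs' inequality. -/
theorem sum_mul_log_le_sum_mul_log_add_log_sum [Fintype ι] {r m : ι → ℝ}
    (hr : ∀ i, 0 ≤ r i) (hr1 : ∑ i, r i = 1) (hm : ∀ i, 0 ≤ m i)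
    (hrm : ∀ i, 0 < r i → 0 < m i) :
    ∑ i, r i * log (m i) ≤ ∑ i, r i * log (r i) + log (∑ i, m i) := by
  obtain ⟨i₀, hi₀⟩ : ∃ i, 0 < r i := by
    by_contra! h
    linarith [Finset.sum_nonpos fun i (_ : i ∈ Finset.univ) => h i]
  set M := ∑ i, m i
  have hM : 0 < M := (hrm i₀ hi₀).trans_le (Finset.single_le_sum (fun i _ => hm i) (by simp))
  -- `log x ≤ x - 1` at `x = m i / (M * r i)`
  have hterm : ∀ i, r i * log (m i) ≤ r i * log (r i) + r i * log M + (m i / M - r i) := by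
    intro i
    rcases (hr i).eq_or_lt with hzero | hpos
    · simp [← hzero, div_nonneg (hm i) hM.le]
    have hmi := hrm i hpos
    have hlog := log_le_sub_one_of_pos (div_pos hmi (mul_pos hM hpos))
    rw [log_div hmi.ne' (mul_pos hM hpos).ne', log_mul hM.ne' hpos.ne'] at hlog
    have hmul := mul_le_mul_of_nonneg_left hlog hpos.le
    have hcancel : r i * (m i / (M * r i)) = m i / M := by field_simp
    nlinarith
  calc ∑ i, r i * log (m i)
      ≤ ∑ i, (r i * log (r i) + r i * log M + (m i / M - r i)) :=
        Finset.sum_le_sum fun i _ => hterm i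
    _ = ∑ i, r i * log (r i) + log M := by
        simp only [Finset.sum_add_distrib, Finset.sum_sub_distrib, ← Finset.sum_mul,
          ← Finset.sum_div, hr1]
        rw [show (∑ i, m i) / M = 1 from div_self hM.ne']
        ring

end Real

section Probability

variable {α β : Type*} [Fintype α] [DecidableEq α] [Fintype β] [DecidableEq β]
  {p : Ω → ℝ}

theorem probOf_nonneg (hp : IsProbMass p) (X : Ω → α) (a : α) : 0 ≤ probOf p X a :=
  Finset.sum_nonneg fun ω _ => by split_ifs <;> simp [hp.1 ω]

theorem sum_probOf (hp : IsProbMass p) (X : Ω → α) : ∑ a, probOf p X a = 1 := by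
  simp only [probOf]
  rw [Finset.sum_comm, ← hp.2]
  simp

theorem sum_probOf_pair (p : Ω → ℝ) (Y : Ω → α) (F : Ω → β) (f : β) :
    ∑ y, probOf p (fun ω => (Y ω, F ω)) (y, f) = probOf p F f := by
  simp only [probOf, Prod.mk.injEq]
  rw [Finset.sum_comm]
  refine Finset.sum_congr rfl fun ω _ => ?_
  by_cases h : F ω = f <;> simp [h]

noncomputable def maxJointProb [Nonempty α] (p : Ω → ℝ) (Y : Ω → α) (F : Ω → β) (f : β) : ℝ :=
  Finset.univ.sup' Finset.univ_nonempty fun y : α => probOf p (fun ω => (Y ω, F ω)) (y, f)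

variable [Nonempty α]

theorem one_sub_bayesError (p : Ω → ℝ) (Y : Ω → α) (F : Ω → β) :
    1 - bayesError p Y F = ∑ f, maxJointProb p Y F f :=
  sub_sub_cancel _ _

theorem probOf_pair_le_maxJointProb (p : Ω → ℝ) (Y : Ω → α) (F : Ω → β) (y : α) (f : β) :
    probOf p (fun ω => (Y ω, F ω)) (y, f) ≤ maxJointProb p Y F f :=
  Finset.le_sup' (fun y => probOf p (fun ω => (Y ω, F ω)) (y, f)) (Finset.mem_univ y)

theorem maxJointProb_nonneg (hp : IsProbMass p) (Y : Ω → α) (F : Ω → β) (f : β) :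
    0 ≤ maxJointProb p Y F f :=
  (probOf_nonneg hp _ _).trans
    (probOf_pair_le_maxJointProb p Y F (Classical.arbitrary α) f)

theorem probOf_le_card_mul_maxJointProb (p : Ω → ℝ) (Y : Ω → α) (F : Ω → β) (f : β) :
    probOf p F f ≤ Fintype.card α * maxJointProb p Y F f := by
  rw [← sum_probOf_pair p Y F f, ← nsmul_eq_mul]
  exact Finset.sum_le_card_nsmul _ _ _ fun y _ => probOf_pair_le_maxJointProb p Y F y f

theorem maxJointProb_pos (Y : Ω → α) {F : Ω → β} {f : β} (hf : 0 < probOf p F f) :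
    0 < maxJointProb p Y F f :=
  pos_of_mul_pos_right (hf.trans_le (probOf_le_card_mul_maxJointProb p Y F f))
    (Nat.cast_nonneg _)

theorem sum_maxJointProb_pos (hp : IsProbMass p) (Y : Ω → α) (F : Ω → β) :
    0 < ∑ f, maxJointProb p Y F f := by
  have hle : ∑ f, probOf p F f ≤ Fintype.card α * ∑ f, maxJointProb p Y F f := by
    rw [Finset.mul_sum]
    exact Finset.sum_le_sum fun f _ => probOf_le_card_mul_maxJointProb p Y F f
  rw [sum_probOf hp F] at hle
  exact pos_of_mul_pos_right (one_pos.trans_le hle) (Nat.cast_nonneg _)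

theorem neg_log_sum_maxJointProb_le_condEntropy (hp : IsProbMass p) (Y : Ω → α)
    (F : Ω → β) : -log (∑ f, maxJointProb p Y F f) ≤ condEntropy p Y F := by
  have hjoint : ∑ a : α × β, probOf p (fun ω => (Y ω, F ω)) a
        * log (probOf p (fun ω => (Y ω, F ω)) a)
      ≤ ∑ f, probOf p F f * log (maxJointProb p Y F f) := by
    rw [Fintype.sum_prod_type, Finset.sum_comm]
    refine Finset.sum_le_sum fun f _ => ?_
    rw [← sum_probOf_pair p Y F f]
    exact Real.sum_mul_log_le_sum_mul_log_of_le _ (fun y _ => probOf_nonneg hp _ _)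
      fun y _ => probOf_pair_le_maxJointProb p Y F y f
  have hgibbs := Real.sum_mul_log_le_sum_mul_log_add_log_sum (probOf_nonneg hp F)
    (sum_probOf hp F) (maxJointProb_nonneg hp Y F) fun f => maxJointProb_pos Y
  simp only [condEntropy, entropy]
  linarith

end Probability

/-- Fano-type (Feder–Merhav) exponential bound:
`-log(1 - P_e) ≤ H(Y|F)` and hence `P_e ≤ 1 - exp(-H(Y|F))`. -/
theorem feder_merhav_bound
    {α β : Type*} [Fintype α] [DecidableEq α] [Nonempty α]
    [Fintype β] [DecidableEq β]
    (p : Ω → ℝ) (hp : IsProbMass p) (Y : Ω → α) (F : Ω → β) :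
    -Real.log (1 - bayesError p Y F) ≤ condEntropy p Y F ∧
      bayesError p Y F ≤ 1 - Real.exp (-(condEntropy p Y F)) := by
  have hlog := neg_log_sum_maxJointProb_le_condEntropy hp Y F
  rw [← one_sub_bayesError] at hlog
  have hsuccess : 0 < 1 - bayesError p Y F := by
    simpa only [one_sub_bayesError] using sum_maxJointProb_pos hp Y F
  refine ⟨hlog, ?_⟩
  have hexp : Real.exp (-condEntropy p Y F) ≤ 1 - bayesError p Y F := by
    rw [← Real.exp_log hsuccess]
    exact Real.exp_le_exp.mpr (by linarith)
  linarith
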